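/- arXiv:2307.09894 — 2 statements merged into one kernel-verified Lean document; each statement's English description precedes it below -/
import Mathlib

section
/- Two matchings on [N] are Knuth-like equivalent (connected by a sequence of elementary Knuth-like transformations) if and only if they have the same core. -/
/-- The set of endpoints of a finite set of chords (unordered pairs). -/
def endpointSet (R : Finset (Sym2 ℕ)) : Set ℕ := {x | ∃ c ∈ R, x ∈ c}

/-- A matching on the vertex set `S`: a finite set of pairwise disjoint chords
(unordered pairs of distinct elements of `S`).  Vertices of `S` not covered by
any chord are the unmatched vertices. -/
structure MatchingOn (S : Finset ℕ) where
  chords : Finset (Sym2 ℕ)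
  not_diag : ∀ c ∈ chords, ¬ c.IsDiag
  mem_support : ∀ c ∈ chords, ∀ x ∈ c, x ∈ S
  disj : ∀ c ∈ chords, ∀ c' ∈ chords, c ≠ c' → ∀ x ∈ c, x ∉ c'

/-- The number of unmatched vertices of a matching. -/
noncomputable def unmatchedCard {S : Finset ℕ} (m : MatchingOn S) : ℕ :=
  ((S : Set ℕ) \ endpointSet m.chords).ncard

/-- `c` has no element of `T` strictly between its endpoints. -/
def btwnFree (T : Set ℕ) (c : Sym2 ℕ) : Prop :=
  ¬ ∃ x ∈ T, ∃ a b, c = s(a, b) ∧ a < x ∧ x < b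

/-- Given that the chords in `R` have already been removed, the chord `c` can be
removed: it is a chord of `m` not yet removed, with no surviving vertex strictly
between its endpoints. -/
def removable {S : Finset ℕ} (m : MatchingOn S) (R : Finset (Sym2 ℕ)) (c : Sym2 ℕ) : Prop :=
  c ∈ m.chords ∧ c ∉ R ∧ btwnFree ((S : Set ℕ) \ endpointSet R) c

/-- `IsReduction m R L`: starting with the chords of `R` already removed, the list `L`
is a valid sequence of successive removals of short chords. -/
inductive IsReduction {S : Finset ℕ} (m : MatchingOn S) :
    Finset (Sym2 ℕ) → List (Sym2 ℕ) → Prop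
  | nil (R : Finset (Sym2 ℕ)) : IsReduction m R []
  | cons (R : Finset (Sym2 ℕ)) (c : Sym2 ℕ) (L : List (Sym2 ℕ)) :
      removable m R c → IsReduction m (insert c R) L → IsReduction m R (c :: L)

/-- A maximal reduction process of `m`: a valid removal sequence starting from `m`
after which no further chord can be removed. -/
def IsMaximalReduction {S : Finset ℕ} (m : MatchingOn S) (L : List (Sym2 ℕ)) : Prop :=
  IsReduction m ∅ L ∧ ∀ c, ¬ removable m L.toFinset c

/-- The set of stable vertices of a matching on `[N]` whose reduction process removed
the chords of `L`. -/
def stableSet (N : ℕ) (L : List (Sym2 ℕ)) : Set ℕ :=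
  (Finset.Icc 1 N : Set ℕ) \ endpointSet L.toFinset

/-- `m0` (a matching on `[M]`) is the core of the matching `m` on `[N]` via the
reduction process `L`: the order-preserving re-indexing of the stable vertices of
`m` by `{1, …, M}` carries the stable chords of `m` exactly to the chords of `m0`. -/
def IsCoreVia {N M : ℕ} (m : MatchingOn (Finset.Icc 1 N)) (L : List (Sym2 ℕ))
    (m0 : MatchingOn (Finset.Icc 1 M)) : Prop :=
  ∃ φ : ℕ → ℕ, Set.BijOn φ (stableSet N L) ↑(Finset.Icc 1 M) ∧
    (∀ x ∈ stableSet N L, ∀ y ∈ stableSet N L, x < y → φ x < φ y) ∧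
    ∀ a b, a ∈ stableSet N L → b ∈ stableSet N L →
      (s(a, b) ∈ m.chords ↔ s(φ a, φ b) ∈ m0.chords)

/-- An elementary Knuth-like transformation from `m` to `m'`:
either interchange a short chord `(i, i+1)` with an adjacent unmatched vertex `i+2`,
or interchange a short chord `(i, i+1)` with an adjacent endpoint `i+2` of another
chord `(i+2, j)`, replacing the two chords by `(i, j)` and `(i+1, i+2)`. -/
def KnuthStep {N : ℕ} (m m' : MatchingOn (Finset.Icc 1 N)) : Prop :=
  (∃ i, s(i, i + 1) ∈ m.chords ∧ i + 2 ∈ Finset.Icc 1 N ∧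
      (∀ c ∈ m.chords, i + 2 ∉ c) ∧
      m'.chords = insert s(i + 1, i + 2) (m.chords.erase s(i, i + 1))) ∨
  (∃ i j, j ≠ i ∧ j ≠ i + 1 ∧ j ≠ i + 2 ∧
      s(i, i + 1) ∈ m.chords ∧ s(i + 2, j) ∈ m.chords ∧
      m'.chords = insert s(i, j) (insert s(i + 1, i + 2)
        ((m.chords.erase s(i, i + 1)).erase s(i + 2, j))))

/-- Knuth-like equivalence: the reflexive-transitive closure of elementary
Knuth-like transformations (in both directions). -/
def KnuthEquiv {N : ℕ} (m m' : MatchingOn (Finset.Icc 1 N)) : Prop :=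
  Relation.ReflTransGen (fun a b => KnuthStep a b ∨ KnuthStep b a) m m'

open Finset in
section
variable {S : Finset ℕ}

lemma sym2_cases (z : Sym2 ℕ) : ∃ a b, z = s(a,b) := by
  obtain ⟨⟨a,b⟩,rfl⟩ := z.exists_rep; exact ⟨a,b,rfl⟩

lemma matching_ext {m m' : MatchingOn S} (h : m.chords = m'.chords) : m = m' := by
  cases m; cases m'; simp_all

lemma endpointSet_empty : endpointSet (∅ : Finset (Sym2 ℕ)) = ∅ := by
  simp [endpointSet]

lemma mem_endpointSet {R : Finset (Sym2 ℕ)} {x : ℕ} :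
    x ∈ endpointSet R ↔ ∃ c ∈ R, x ∈ c := Iff.rfl

lemma endpointSet_mono {R R' : Finset (Sym2 ℕ)} (h : R ⊆ R') :
    endpointSet R ⊆ endpointSet R' := fun x ⟨c, hc, hx⟩ => ⟨c, h hc, hx⟩

lemma endpointSet_insert {c : Sym2 ℕ} {R : Finset (Sym2 ℕ)} :
    endpointSet (insert c R) = {x | x ∈ c} ∪ endpointSet R := by
  ext x; simp [endpointSet]

lemma btwnFree_anti {T T' : Set ℕ} {c : Sym2 ℕ} (hsub : T' ⊆ T) (h : btwnFree T c) :
    btwnFree T' c := fun ⟨x, hx, a, b, hab⟩ => h ⟨x, hsub hx, a, b, hab⟩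

lemma removable_mono {m : MatchingOn S} {R R' : Finset (Sym2 ℕ)} {c : Sym2 ℕ}
    (h : removable m R c) (hE : endpointSet R ⊆ endpointSet R') (hc : c ∉ R') :
    removable m R' c :=
  ⟨h.1, hc, btwnFree_anti (Set.diff_subset_diff_right hE) h.2.2⟩

/-- endpoints of a non-removed chord survive. -/
lemma endpoint_survives {m : MatchingOn S} {R : Finset (Sym2 ℕ)} (hR : R ⊆ m.chords)
    {c : Sym2 ℕ} (hc : c ∈ m.chords) (hcR : c ∉ R) {x : ℕ} (hx : x ∈ c) :
    x ∈ (S : Set ℕ) \ endpointSet R := by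
  refine ⟨by exact_mod_cast m.mem_support c hc x hx, ?_⟩
  rintro ⟨c', hc'R, hxc'⟩
  exact m.disj c hc c' (hR hc'R) (fun h => hcR (h ▸ hc'R)) x hx hxc'
end
section
variable {S : Finset ℕ} {m : MatchingOn S}

lemma IsReduction.subsets {R : Finset (Sym2 ℕ)} {L : List (Sym2 ℕ)}
    (h : IsReduction m R L) (hR : R ⊆ m.chords) : R ∪ L.toFinset ⊆ m.chords := by
  induction h with
  | nil R => simpa using hR
  | cons R c L hrem hred ih =>
      have h1 : insert c R ⊆ m.chords := Finset.insert_subset hrem.1 hR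
      have := ih h1
      intro x hx
      simp only [List.toFinset_cons, Finset.mem_union, Finset.mem_insert] at hx
      rcases hx with (hx | rfl | hx)
      · exact hR hx
      · exact hrem.1
      · exact this (Finset.mem_union_right _ hx)

lemma reduction_subset_maximal {L : List (Sym2 ℕ)} (hmax : IsMaximalReduction m L)
    {R : Finset (Sym2 ℕ)} {L' : List (Sym2 ℕ)} (h : IsReduction m R L')
    (hsub : R ⊆ L.toFinset) : R ∪ L'.toFinset ⊆ L.toFinset := by
  induction h with
  | nil R => simpa using hsub
  | cons R c L' hrem hred ih =>
      have hc : c ∈ L.toFinset := by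
        by_contra hc
        exact hmax.2 c (removable_mono hrem (endpointSet_mono hsub) hc)
      have h1 : insert c R ⊆ L.toFinset := Finset.insert_subset hc hsub
      have := ih h1
      intro x hx
      simp only [List.toFinset_cons, Finset.mem_union, Finset.mem_insert] at hx
      rcases hx with (hx | rfl | hx)
      · exact hsub hx
      · exact hc
      · exact this (Finset.mem_union_right _ hx)

lemma maximal_toFinset_eq {L L' : List (Sym2 ℕ)} (h : IsMaximalReduction m L)
    (h' : IsMaximalReduction m L') : L.toFinset = L'.toFinset := by
  apply Finset.Subset.antisymm
  · have := reduction_subset_maximal h' h.1 (Finset.empty_subset _)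
    simpa using this
  · have := reduction_subset_maximal h h'.1 (Finset.empty_subset _)
    simpa using this

lemma exists_reduction_aux (m : MatchingOn S) :
    ∀ n (R : Finset (Sym2 ℕ)), (m.chords \ R).card ≤ n →
      ∃ L, IsReduction m R L ∧ ∀ c, ¬ removable m (R ∪ L.toFinset) c := by
  intro n
  induction n with
  | zero =>
      intro R hcard
      refine ⟨[], IsReduction.nil R, fun c hc => ?_⟩
      simp only [List.toFinset_nil, Finset.union_empty] at hc
      have : c ∈ m.chords \ R := Finset.mem_sdiff.2 ⟨hc.1, hc.2.1⟩
      have := Finset.card_pos.2 ⟨c, this⟩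
      omega
  | succ n ih =>
      intro R hcard
      by_cases hex : ∃ c, removable m R c
      · obtain ⟨c, hc⟩ := hex
        have hdiff : m.chords \ insert c R = (m.chords \ R).erase c := by
          ext d; simp only [Finset.mem_sdiff, Finset.mem_insert, Finset.mem_erase]
          tauto
        have hcmem : c ∈ m.chords \ R := Finset.mem_sdiff.2 ⟨hc.1, hc.2.1⟩
        have hlt : (m.chords \ insert c R).card ≤ n := by
          rw [hdiff]
          have := Finset.card_erase_of_mem hcmem
          omega
        obtain ⟨L, hL, hLmax⟩ := ih (insert c R) hlt
        refine ⟨c :: L, IsReduction.cons R c L hc hL, fun d hd => ?_⟩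
        apply hLmax d
        have : insert c R ∪ L.toFinset = R ∪ (c :: L).toFinset := by
          ext x; simp only [List.toFinset_cons, Finset.mem_union, Finset.mem_insert]; tauto
        rwa [this]
      · push_neg at hex
        refine ⟨[], IsReduction.nil R, fun c hc => hex c ?_⟩
        simpa using hc

lemma exists_maximal (m : MatchingOn S) : ∃ L, IsMaximalReduction m L := by
  obtain ⟨L, hL, hmax⟩ := exists_reduction_aux m (m.chords \ ∅).card ∅ le_rfl
  exact ⟨L, hL, by simpa using hmax⟩

lemma exists_maximal_cons {c : Sym2 ℕ} (hc : removable m ∅ c) :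
    ∃ L, IsMaximalReduction m (c :: L) := by
  obtain ⟨L, hL, hmax⟩ := exists_reduction_aux m (m.chords \ {c}).card {c} le_rfl
  have h0 : (insert c (∅ : Finset (Sym2 ℕ))) = {c} := rfl
  refine ⟨L, ⟨IsReduction.cons ∅ c L hc (h0 ▸ hL), fun d hd => hmax d ?_⟩⟩
  have : ({c} : Finset (Sym2 ℕ)) ∪ L.toFinset = (c :: L).toFinset := by
    ext x; simp
  rwa [this]

end

section
open Classical in
lemma bijOn_Iic_ncard {A B : Set ℕ} (hA : A.Finite) {f : ℕ → ℕ}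
    (hf : Set.BijOn f A B) (hmono : ∀ x ∈ A, ∀ y ∈ A, x < y → f x < f y)
    {x : ℕ} (hx : x ∈ A) : (B ∩ Set.Iic (f x)).ncard = (A ∩ Set.Iic x).ncard := by
  have hbij : Set.BijOn f (A ∩ Set.Iic x) (B ∩ Set.Iic (f x)) := by
    refine ⟨?_, hf.injOn.mono Set.inter_subset_left, ?_⟩
    · rintro a ⟨ha, hax⟩
      refine ⟨hf.mapsTo ha, Set.mem_Iic.2 ?_⟩
      rcases eq_or_lt_of_le (Set.mem_Iic.1 hax) with rfl | hlt
      · exact le_rfl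
      · exact le_of_lt (hmono a ha x hx hlt)
    · rintro y ⟨hy, hyx⟩
      obtain ⟨a, ha, rfl⟩ := hf.surjOn hy
      refine ⟨a, ⟨ha, ?_⟩, rfl⟩
      by_contra hax
      simp only [Set.mem_Iic, not_le] at hax
      exact absurd (hmono x hx a ha hax) (not_lt.2 (Set.mem_Iic.1 hyx))
  rw [← hbij.image_eq, Set.ncard_image_of_injOn hbij.injOn]

lemma ncard_Iic_inj {B : Set ℕ} (hB : B.Finite) {y y' : ℕ} (hy : y ∈ B) (hy' : y' ∈ B)
    (h : (B ∩ Set.Iic y).ncard = (B ∩ Set.Iic y').ncard) : y = y' := by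
  rcases lt_trichotomy y y' with hlt | he | hlt
  · exfalso
    have hss : B ∩ Set.Iic y ⊂ B ∩ Set.Iic y' := by
      constructor
      · exact Set.inter_subset_inter_right _ (Set.Iic_subset_Iic.2 hlt.le)
      · intro hsub
        have := hsub ⟨hy', Set.mem_Iic.2 le_rfl⟩
        exact absurd this.2 (by simpa using hlt)
    have := Set.ncard_lt_ncard hss (hB.inter_of_left _)
    omega
  · exact he
  · exfalso
    have hss : B ∩ Set.Iic y' ⊂ B ∩ Set.Iic y := by
      constructor
      · exact Set.inter_subset_inter_right _ (Set.Iic_subset_Iic.2 hlt.le)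
      · intro hsub
        have := hsub ⟨hy, Set.mem_Iic.2 le_rfl⟩
        exact absurd this.2 (by simpa using hlt)
    have := Set.ncard_lt_ncard hss (hB.inter_of_left _)
    omega

lemma mono_bij_unique {A B : Set ℕ} (hA : A.Finite) (hB : B.Finite) {f g : ℕ → ℕ}
    (hf : Set.BijOn f A B) (hg : Set.BijOn g A B)
    (hfm : ∀ x ∈ A, ∀ y ∈ A, x < y → f x < f y)
    (hgm : ∀ x ∈ A, ∀ y ∈ A, x < y → g x < g y) :
    ∀ x ∈ A, f x = g x := by
  intro x hx
  exact ncard_Iic_inj hB (hf.mapsTo hx) (hg.mapsTo hx)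
    ((bijOn_Iic_ncard hA hf hfm hx).trans (bijOn_Iic_ncard hA hg hgm hx).symm)

variable {N : ℕ}

lemma stableSet_finite (L : List (Sym2 ℕ)) : (stableSet N L).Finite :=
  Set.Finite.subset (Finset.Icc 1 N).finite_toSet Set.diff_subset

open Classical in
noncomputable def stableFinset (N : ℕ) (L : List (Sym2 ℕ)) : Finset ℕ :=
  (Finset.Icc 1 N).filter (fun x => x ∉ endpointSet L.toFinset)

lemma coe_stableFinset (L : List (Sym2 ℕ)) : ↑(stableFinset N L) = stableSet N L := by
  ext x; simp [stableFinset, stableSet, Set.mem_diff]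

def rankIn (F : Finset ℕ) (x : ℕ) : ℕ := (F.filter (· ≤ x)).card

lemma rankIn_mono {F : Finset ℕ} {x y : ℕ} (hy : y ∈ F) (hxy : x < y) :
    rankIn F x < rankIn F y := by
  apply Finset.card_lt_card
  constructor
  · intro a ha
    simp only [Finset.mem_filter] at ha ⊢
    exact ⟨ha.1, le_trans ha.2 hxy.le⟩
  · intro hsub
    have := hsub (Finset.mem_filter.2 ⟨hy, le_rfl⟩)
    simp only [Finset.mem_filter] at this
    omega

lemma rankIn_mem {F : Finset ℕ} {x : ℕ} (hx : x ∈ F) :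
    rankIn F x ∈ Finset.Icc 1 F.card := by
  simp only [Finset.mem_Icc]
  constructor
  · have : x ∈ F.filter (· ≤ x) := Finset.mem_filter.2 ⟨hx, le_rfl⟩
    exact Finset.card_pos.2 ⟨x, this⟩
  · exact Finset.card_le_card (Finset.filter_subset _ _)

lemma rankIn_injOn {F : Finset ℕ} {x y : ℕ} (hx : x ∈ F) (hy : y ∈ F)
    (h : rankIn F x = rankIn F y) : x = y := by
  rcases lt_trichotomy x y with hlt | he | hlt
  · exact absurd h (Nat.ne_of_lt (rankIn_mono hy hlt))
  · exact he
  · exact absurd h.symm (Nat.ne_of_lt (rankIn_mono hx hlt))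

lemma rankIn_bijOn (F : Finset ℕ) : Set.BijOn (rankIn F) ↑F ↑(Finset.Icc 1 F.card) := by
  refine ⟨fun x hx => by exact_mod_cast rankIn_mem (by exact_mod_cast hx), ?_, ?_⟩
  · intro x hx y hy h
    exact rankIn_injOn (by exact_mod_cast hx) (by exact_mod_cast hy) h
  · intro n hn
    have hcard : (Finset.Icc 1 F.card).card ≤ F.card := by
      simp [Nat.card_Icc]
    obtain ⟨x, hx, h⟩ := Finset.surj_on_of_inj_on_of_card_le
      (fun x (_ : x ∈ F) => rankIn F x) (fun x hx => rankIn_mem hx)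
      (fun x y hx hy h => rankIn_injOn hx hy h) hcard n (by exact_mod_cast hn)
    exact ⟨x, by exact_mod_cast hx, h.symm⟩
end

section
variable {N M : ℕ}

open Classical in
/-- The canonical core matching obtained from `m` by removing `L` and re-indexing. -/
noncomputable def coreMatching (N : ℕ) (m : MatchingOn (Finset.Icc 1 N)) (L : List (Sym2 ℕ)) :
    MatchingOn (Finset.Icc 1 (stableFinset N L).card) where
  chords := (m.chords.filter (fun c => ∀ x ∈ c, x ∈ stableSet N L)).image
    (Sym2.map (rankIn (stableFinset N L)))
  not_diag := by
    intro c hc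
    simp only [Finset.mem_image, Finset.mem_filter] at hc
    obtain ⟨d, ⟨hd, hstab⟩, rfl⟩ := hc
    obtain ⟨a, b, rfl⟩ := sym2_cases d
    rw [Sym2.map_pair_eq, Sym2.isDiag_iff_proj_eq]
    intro h
    have ha : a ∈ stableFinset N L := by
      rw [← Finset.mem_coe, coe_stableFinset]; exact hstab a (by simp)
    have hb : b ∈ stableFinset N L := by
      rw [← Finset.mem_coe, coe_stableFinset]; exact hstab b (by simp)
    have := rankIn_injOn ha hb h
    exact m.not_diag _ hd (by rw [Sym2.isDiag_iff_proj_eq]; exact this)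
  mem_support := by
    intro c hc x hx
    simp only [Finset.mem_image, Finset.mem_filter] at hc
    obtain ⟨d, ⟨hd, hstab⟩, rfl⟩ := hc
    obtain ⟨w, hw, rfl⟩ := Sym2.mem_map.1 hx
    have hwF : w ∈ stableFinset N L := by
      rw [← Finset.mem_coe, coe_stableFinset]; exact hstab w hw
    exact rankIn_mem hwF
  disj := by
    intro c hc c' hc' hne x hx hx'
    simp only [Finset.mem_image, Finset.mem_filter] at hc hc'
    obtain ⟨d, ⟨hd, hstab⟩, rfl⟩ := hc
    obtain ⟨d', ⟨hd', hstab'⟩, rfl⟩ := hc'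
    obtain ⟨w, hw, rfl⟩ := Sym2.mem_map.1 hx
    obtain ⟨w', hw', hww⟩ := Sym2.mem_map.1 hx'
    have hwF : w ∈ stableFinset N L := by
      rw [← Finset.mem_coe, coe_stableFinset]; exact hstab w hw
    have hwF' : w' ∈ stableFinset N L := by
      rw [← Finset.mem_coe, coe_stableFinset]; exact hstab' w' hw'
    have : w' = w := rankIn_injOn hwF' hwF hww
    subst this
    have hdd : d ≠ d' := fun h => hne (by rw [h])
    exact m.disj d hd d' hd' hdd w' hw hw'

lemma stable_mem_finset {L : List (Sym2 ℕ)} {x : ℕ} (hx : x ∈ stableSet N L) :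
    x ∈ stableFinset N L := by rw [← Finset.mem_coe, coe_stableFinset]; exact hx

lemma coreMatching_isCoreVia (m : MatchingOn (Finset.Icc 1 N)) (L : List (Sym2 ℕ)) :
    IsCoreVia m L (coreMatching N m L) := by
  classical
  refine ⟨rankIn (stableFinset N L), ?_, ?_, ?_⟩
  · have := rankIn_bijOn (stableFinset N L)
    rwa [coe_stableFinset] at this
  · intro x hx y hy hxy
    exact rankIn_mono (stable_mem_finset hy) hxy
  · intro a b ha hb
    constructor
    · intro hmem
      show _ ∈ Finset.image _ _
      rw [Finset.mem_image]
      refine ⟨s(a, b), Finset.mem_filter.2 ⟨hmem, ?_⟩, Sym2.map_pair_eq _ _ _⟩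
      intro x hxmem
      rcases Sym2.mem_iff.1 hxmem with rfl | rfl
      · exact ha
      · exact hb
    · intro hmem
      have hmem' := Finset.mem_image.1 hmem
      obtain ⟨d, hd, heq⟩ := hmem'
      rw [Finset.mem_filter] at hd
      obtain ⟨a', b', rfl⟩ := sym2_cases d
      rw [Sym2.map_pair_eq, Sym2.eq_iff] at heq
      have ha' : a' ∈ stableFinset N L := stable_mem_finset (hd.2 a' (by simp))
      have hb' : b' ∈ stableFinset N L := stable_mem_finset (hd.2 b' (by simp))
      have haF := stable_mem_finset ha
      have hbF := stable_mem_finset hb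
      rcases heq with ⟨h1, h2⟩ | ⟨h1, h2⟩
      · rw [rankIn_injOn ha' haF h1, rankIn_injOn hb' hbF h2] at hd
        exact hd.1
      · rw [rankIn_injOn ha' hbF h1, rankIn_injOn hb' haF h2] at hd
        have : s(a, b) = s(b, a) := Sym2.eq_swap
        rw [this]; exact hd.1
end

section
variable {N M M' : ℕ}

/-- `m0` is a core of `m`. -/
def HasCore {N M : ℕ} (m : MatchingOn (Finset.Icc 1 N)) (m0 : MatchingOn (Finset.Icc 1 M)) :
    Prop :=
  ∃ L, IsMaximalReduction m L ∧ IsCoreVia m L m0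

lemma exists_hasCore (m : MatchingOn (Finset.Icc 1 N)) :
    ∃ (M : ℕ) (m0 : MatchingOn (Finset.Icc 1 M)), HasCore m m0 := by
  obtain ⟨L, hL⟩ := exists_maximal m
  exact ⟨_, coreMatching N m L, L, hL, coreMatching_isCoreVia m L⟩

lemma stableSet_congr {L L' : List (Sym2 ℕ)} (h : L.toFinset = L'.toFinset) :
    stableSet N L = stableSet N L' := by rw [stableSet, stableSet, h]

lemma coreVia_indep {m : MatchingOn (Finset.Icc 1 N)} {L L' : List (Sym2 ℕ)}
    {m0 : MatchingOn (Finset.Icc 1 M)} (h : IsMaximalReduction m L)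
    (h' : IsMaximalReduction m L') (hc : IsCoreVia m L m0) : IsCoreVia m L' m0 := by
  have hs : stableSet N L' = stableSet N L :=
    stableSet_congr (maximal_toFinset_eq h' h)
  obtain ⟨φ, h1, h2, h3⟩ := hc
  exact ⟨φ, by rw [hs]; exact h1, by rw [hs]; exact h2, by rw [hs]; exact h3⟩

lemma hasCore_of_max {m : MatchingOn (Finset.Icc 1 N)} {m0 : MatchingOn (Finset.Icc 1 M)}
    {L : List (Sym2 ℕ)} (h : HasCore m m0) (hL : IsMaximalReduction m L) :
    IsCoreVia m L m0 := by
  obtain ⟨L', hL', hc⟩ := h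
  exact coreVia_indep hL' hL hc

lemma ncard_Icc_coe (M : ℕ) : ((Finset.Icc 1 M : Finset ℕ) : Set ℕ).ncard = M := by
  rw [Set.ncard_coe_finset, Nat.card_Icc]
  omega

lemma coreVia_M_eq {m : MatchingOn (Finset.Icc 1 N)} {L : List (Sym2 ℕ)}
    {m0 : MatchingOn (Finset.Icc 1 M)} (hc : IsCoreVia m L m0) :
    M = (stableSet N L).ncard := by
  obtain ⟨φ, h1, _, _⟩ := hc
  rw [← ncard_Icc_coe M, ← h1.image_eq, Set.ncard_image_of_injOn h1.injOn]

lemma coreVia_unique {m : MatchingOn (Finset.Icc 1 N)} {L : List (Sym2 ℕ)}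
    {m0 : MatchingOn (Finset.Icc 1 M)} {m0' : MatchingOn (Finset.Icc 1 M')}
    (hc : IsCoreVia m L m0) (hc' : IsCoreVia m L m0') :
    M = M' ∧ m0.chords = m0'.chords := by
  have hMM : M = M' := by rw [coreVia_M_eq hc, coreVia_M_eq hc']
  subst hMM
  refine ⟨rfl, ?_⟩
  obtain ⟨φ, h1, h2, h3⟩ := hc
  obtain ⟨φ', h1', h2', h3'⟩ := hc'
  have hfin : (stableSet N L).Finite := stableSet_finite L
  have heq : ∀ x ∈ stableSet N L, φ x = φ' x :=
    mono_bij_unique hfin ((Finset.Icc 1 M).finite_toSet) h1 h1' h2 h2'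
  ext c
  obtain ⟨u, v, rfl⟩ := sym2_cases c
  constructor
  · intro hc
    have hu : u ∈ (Finset.Icc 1 M : Finset ℕ) := m0.mem_support _ hc u (by simp)
    have hv : v ∈ (Finset.Icc 1 M : Finset ℕ) := m0.mem_support _ hc v (by simp)
    obtain ⟨a, ha, rfl⟩ := h1.surjOn (by exact_mod_cast hu)
    obtain ⟨b, hb, rfl⟩ := h1.surjOn (by exact_mod_cast hv)
    have := (h3 a b ha hb).2 hc
    have h2' := (h3' a b ha hb).1 this
    rwa [← heq a ha, ← heq b hb] at h2'
  · intro hc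
    have hu : u ∈ (Finset.Icc 1 M : Finset ℕ) := m0'.mem_support _ hc u (by simp)
    have hv : v ∈ (Finset.Icc 1 M : Finset ℕ) := m0'.mem_support _ hc v (by simp)
    obtain ⟨a, ha, rfl⟩ := h1'.surjOn (by exact_mod_cast hu)
    obtain ⟨b, hb, rfl⟩ := h1'.surjOn (by exact_mod_cast hv)
    have := (h3' a b ha hb).2 hc
    have h2'' := (h3 a b ha hb).1 this
    rwa [heq a ha, heq b hb] at h2''

lemma coreVia_transfer {m : MatchingOn (Finset.Icc 1 N)} {L : List (Sym2 ℕ)}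
    {m0 m0' : MatchingOn (Finset.Icc 1 M)} (h : m0.chords = m0'.chords)
    (hc : IsCoreVia m L m0) : IsCoreVia m L m0' := by
  obtain ⟨φ, h1, h2, h3⟩ := hc
  exact ⟨φ, h1, h2, fun a b ha hb => by rw [← h]; exact h3 a b ha hb⟩

lemma hasCore_unique {m : MatchingOn (Finset.Icc 1 N)} {m0 : MatchingOn (Finset.Icc 1 M)}
    {m0' : MatchingOn (Finset.Icc 1 M')} (h : HasCore m m0) (h' : HasCore m m0') :
    M = M' ∧ m0.chords = m0'.chords := by
  obtain ⟨L, hL, hc⟩ := h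
  obtain ⟨L', hL', hc'⟩ := h'
  exact coreVia_unique hc (coreVia_indep hL' hL hc')

lemma hasCore_M_le {m : MatchingOn (Finset.Icc 1 N)} {m0 : MatchingOn (Finset.Icc 1 M)}
    (h : HasCore m m0) : M ≤ N := by
  obtain ⟨L, hL, hc⟩ := h
  rw [coreVia_M_eq hc]
  calc (stableSet N L).ncard ≤ ((Finset.Icc 1 N : Finset ℕ) : Set ℕ).ncard :=
        Set.ncard_le_ncard Set.diff_subset ((Finset.Icc 1 N).finite_toSet)
    _ = N := ncard_Icc_coe N
end

section

/-- Surviving vertices. -/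
def Vv (N : ℕ) (R : Finset (Sym2 ℕ)) : Set ℕ :=
  ↑(Finset.Icc 1 N) \ endpointSet R

lemma sym2_map_invol {σ : ℕ → ℕ} (h : Function.Involutive σ) (z : Sym2 ℕ) :
    Sym2.map σ (Sym2.map σ z) = z := by
  obtain ⟨a, b, rfl⟩ := sym2_cases z
  simp [Sym2.map_pair_eq, h a, h b]

/-- A correspondence between the partial reduction states `(m, R)` and `(m', R')`
induced by an involution `σ` that is an order isomorphism on survivors. -/
structure Corr (N N' : ℕ) (m : MatchingOn (Finset.Icc 1 N)) (m' : MatchingOn (Finset.Icc 1 N'))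
    (R R' : Finset (Sym2 ℕ)) (σ : ℕ → ℕ) : Prop where
  inv : Function.Involutive σ
  hR : R ⊆ m.chords
  hR' : R' ⊆ m'.chords
  maps : ∀ x ∈ Vv N R, σ x ∈ Vv N' R'
  maps' : ∀ y ∈ Vv N' R', σ y ∈ Vv N R
  mono : ∀ x ∈ Vv N R, ∀ y ∈ Vv N R, x < y → σ x < σ y
  chords_iff : ∀ d, (d ∈ m.chords ∧ d ∉ R) ↔ (Sym2.map σ d ∈ m'.chords ∧ Sym2.map σ d ∉ R')

variable {N N' : ℕ} {m : MatchingOn (Finset.Icc 1 N)} {m' : MatchingOn (Finset.Icc 1 N')}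
  {R R' : Finset (Sym2 ℕ)} {σ : ℕ → ℕ}

lemma Corr.mono' (h : Corr N N' m m' R R' σ) :
    ∀ x ∈ Vv N' R', ∀ y ∈ Vv N' R', x < y → σ x < σ y := by
  intro x hx y hy hxy
  rcases lt_trichotomy (σ x) (σ y) with hlt | he | hlt
  · exact hlt
  · exact absurd (h.inv.injective he) (Nat.ne_of_lt hxy)
  · have := h.mono _ (h.maps' y hy) _ (h.maps' x hx) hlt
    rw [h.inv x, h.inv y] at this
    omega

lemma Corr.symm (h : Corr N N' m m' R R' σ) : Corr N' N m' m R' R σ where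
  inv := h.inv
  hR := h.hR'
  hR' := h.hR
  maps := h.maps'
  maps' := h.maps
  mono := h.mono'
  chords_iff := by
    intro d
    have := (h.chords_iff (Sym2.map σ d)).symm
    rwa [sym2_map_invol h.inv] at this

lemma Corr.lt_reflect (h : Corr N N' m m' R R' σ) {x y : ℕ} (hx : x ∈ Vv N R)
    (hy : y ∈ Vv N R) (hlt : σ x < σ y) : x < y := by
  rcases lt_trichotomy x y with h1 | h1 | h1
  · exact h1
  · subst h1; omega
  · exact absurd (h.mono y hy x hx h1) (by omega)

lemma Corr.removable_map (h : Corr N N' m m' R R' σ) {c : Sym2 ℕ} (hc : removable m R c) :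
    removable m' R' (Sym2.map σ c) := by
  obtain ⟨a, b, rfl⟩ := sym2_cases c
  have ha : a ∈ Vv N R := endpoint_survives h.hR hc.1 hc.2.1 (by simp)
  have hb : b ∈ Vv N R := endpoint_survives h.hR hc.1 hc.2.1 (by simp)
  have hmem := (h.chords_iff s(a, b)).1 ⟨hc.1, hc.2.1⟩
  refine ⟨hmem.1, hmem.2, ?_⟩
  rintro ⟨y, hyV, u, v, huv, h1, h2⟩
  have hyV' : y ∈ Vv N' R' := hyV
  have hxV : σ y ∈ Vv N R := h.maps' y hyV'
  have hyy : σ (σ y) = y := h.inv y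
  rw [Sym2.map_pair_eq, Sym2.eq_iff] at huv
  apply hc.2.2
  rcases huv with ⟨rfl, rfl⟩ | ⟨rfl, rfl⟩
  · refine ⟨σ y, hxV, a, b, rfl, ?_, ?_⟩
    · exact h.lt_reflect ha hxV (by rw [hyy]; exact h1)
    · exact h.lt_reflect hxV hb (by rw [hyy]; exact h2)
  · refine ⟨σ y, hxV, b, a, Sym2.eq_swap, ?_, ?_⟩
    · exact h.lt_reflect hb hxV (by rw [hyy]; exact h1)
    · exact h.lt_reflect hxV ha (by rw [hyy]; exact h2)

lemma Corr.insert_corr (h : Corr N N' m m' R R' σ) {c : Sym2 ℕ} (hc : removable m R c) :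
    Corr N N' m m' (insert c R) (insert (Sym2.map σ c) R') σ := by
  have hc' := h.removable_map hc
  have hV : ∀ x, x ∈ Vv N (insert c R) ↔ x ∈ Vv N R ∧ x ∉ c := by
    intro x
    simp only [Vv, Set.mem_diff, endpointSet_insert, Set.mem_union, Set.mem_setOf_eq]
    tauto
  have hV' : ∀ y, y ∈ Vv N' (insert (Sym2.map σ c) R') ↔ y ∈ Vv N' R' ∧ y ∉ Sym2.map σ c := by
    intro y
    simp only [Vv, Set.mem_diff, endpointSet_insert, Set.mem_union, Set.mem_setOf_eq]
    tauto
  refine ⟨h.inv, Finset.insert_subset hc.1 h.hR, Finset.insert_subset hc'.1 h.hR', ?_, ?_, ?_, ?_⟩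
  · intro x hx
    rw [hV] at hx
    rw [hV']
    refine ⟨h.maps x hx.1, fun hmem => ?_⟩
    obtain ⟨w, hw, hwx⟩ := Sym2.mem_map.1 hmem
    exact hx.2 (h.inv.injective hwx ▸ hw)
  · intro y hy
    rw [hV'] at hy
    rw [hV]
    refine ⟨h.maps' y hy.1, fun hmem => hy.2 ?_⟩
    have : σ (σ y) ∈ Sym2.map σ c := Sym2.mem_map.2 ⟨σ y, hmem, rfl⟩
    rwa [h.inv y] at this
  · intro x hx y hy hxy
    rw [hV] at hx hy
    exact h.mono x hx.1 y hy.1 hxy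
  · intro d
    have base := h.chords_iff d
    constructor
    · rintro ⟨hd, hdR⟩
      simp only [Finset.mem_insert, not_or] at hdR
      have := base.1 ⟨hd, hdR.2⟩
      refine ⟨this.1, ?_⟩
      simp only [Finset.mem_insert, not_or]
      refine ⟨fun heq => hdR.1 ?_, this.2⟩
      have := congrArg (Sym2.map σ) heq
      rwa [sym2_map_invol h.inv, sym2_map_invol h.inv] at this
    · rintro ⟨hd, hdR⟩
      simp only [Finset.mem_insert, not_or] at hdR
      have := base.2 ⟨hd, hdR.2⟩
      refine ⟨this.1, ?_⟩
      simp only [Finset.mem_insert, not_or]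
      exact ⟨fun heq => hdR.1 (by rw [heq]), this.2⟩

lemma Corr.reduction (h : Corr N N' m m' R R' σ) {L : List (Sym2 ℕ)}
    (hL : IsReduction m R L) :
    IsReduction m' R' (L.map (Sym2.map σ)) ∧
      Corr N N' m m' (R ∪ L.toFinset) (R' ∪ (L.map (Sym2.map σ)).toFinset) σ := by
  induction hL generalizing R' with
  | nil R => exact ⟨IsReduction.nil R', by simpa using h⟩
  | cons R c L hrem hred ih =>
      have h1 := h.insert_corr hrem
      obtain ⟨hred', hcorr⟩ := ih h1
      refine ⟨IsReduction.cons R' _ _ (h.removable_map hrem) hred', ?_⟩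
      have e1 : R ∪ (c :: L).toFinset = insert c R ∪ L.toFinset := by
        ext x; simp only [List.toFinset_cons, Finset.mem_union, Finset.mem_insert]; tauto
      have e2 : R' ∪ ((c :: L).map (Sym2.map σ)).toFinset =
          insert (Sym2.map σ c) R' ∪ (L.map (Sym2.map σ)).toFinset := by
        ext x; simp only [List.map_cons, List.toFinset_cons, Finset.mem_union,
          Finset.mem_insert]; tauto
      rw [e1, e2]
      exact hcorr
end

section
variable {N N' M : ℕ} {m : MatchingOn (Finset.Icc 1 N)} {m' : MatchingOn (Finset.Icc 1 N')}
  {σ : ℕ → ℕ}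

lemma Corr.core {L L' : List (Sym2 ℕ)} {m0 : MatchingOn (Finset.Icc 1 M)}
    (h : Corr N N' m m' L.toFinset L'.toFinset σ) (hcv : IsCoreVia m L m0) :
    IsCoreVia m' L' m0 := by
  obtain ⟨φ, h1, h2, h3⟩ := hcv
  have hσbij : Set.BijOn σ (Vv N' L'.toFinset) (Vv N L.toFinset) :=
    ⟨h.maps', h.inv.injective.injOn, fun x hx => ⟨σ x, h.maps x hx, h.inv x⟩⟩
  have hsN : stableSet N L = Vv N L.toFinset := rfl
  have hsN' : stableSet N' L' = Vv N' L'.toFinset := rfl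
  refine ⟨φ ∘ σ, ?_, ?_, ?_⟩
  · rw [hsN']
    rw [hsN] at h1
    exact h1.comp hσbij
  · intro x hx y hy hxy
    rw [hsN'] at hx hy
    have := h.mono' x hx y hy hxy
    exact h2 _ (hsN ▸ h.maps' x hx) _ (hsN ▸ h.maps' y hy) this
  · intro a b ha hb
    rw [hsN'] at ha hb
    have hσa := h.maps' a ha
    have hσb := h.maps' b hb
    have key := h.chords_iff s(σ a, σ b)
    rw [Sym2.map_pair_eq, h.inv a, h.inv b] at key
    constructor
    · intro hmem
      have hnot : s(a, b) ∉ L'.toFinset := fun hR => ha.2 ⟨_, hR, by simp⟩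
      have := key.2 ⟨hmem, hnot⟩
      exact (h3 (σ a) (σ b) (hsN ▸ hσa) (hsN ▸ hσb)).1 this.1
    · intro hmem
      have hm := (h3 (σ a) (σ b) (hsN ▸ hσa) (hsN ▸ hσb)).2 hmem
      have hnot : s(σ a, σ b) ∉ L.toFinset := fun hR => hσa.2 ⟨_, hR, by simp⟩
      exact (key.1 ⟨hm, hnot⟩).1

lemma step_transfer {c c' : Sym2 ℕ} (hc : removable m ∅ c) (hc' : removable m' ∅ c')
    (h : Corr N N' m m' {c} {c'} σ) {m0 : MatchingOn (Finset.Icc 1 M)}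
    (hm : HasCore m m0) : HasCore m' m0 := by
  obtain ⟨L₁, hmax⟩ := exists_maximal_cons hc
  have hcv : IsCoreVia m (c :: L₁) m0 := hasCore_of_max hm hmax
  have hred : IsReduction m {c} L₁ := by
    have h0 := hmax.1
    cases h0 with
    | cons _ _ _ _ h2 => rwa [show insert _ (∅ : Finset (Sym2 ℕ)) = {_} from rfl] at h2
  obtain ⟨hred', hcorr⟩ := h.reduction hred
  set L₁' := L₁.map (Sym2.map σ) with hL₁'
  have hfin : ({c} : Finset (Sym2 ℕ)) ∪ L₁.toFinset = (c :: L₁).toFinset := by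
    ext; simp
  have hfin' : ({c'} : Finset (Sym2 ℕ)) ∪ L₁'.toFinset = (c' :: L₁').toFinset := by
    ext; simp
  rw [hfin, hfin'] at hcorr
  have hmax' : IsMaximalReduction m' (c' :: L₁') := by
    constructor
    · exact IsReduction.cons ∅ c' L₁' hc' (by rwa [show insert _ (∅ : Finset (Sym2 ℕ)) = {_} from rfl])
    · intro d hd
      exact hmax.2 _ (hcorr.symm.removable_map hd)
  exact ⟨c' :: L₁', hmax', hcorr.core hcv⟩
end

section
/-- The swap of `i` and `i+2`. -/
def swp (i : ℕ) : ℕ → ℕ := fun x => if x = i then i + 2 else if x = i + 2 then i else x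

lemma swp_invol (i : ℕ) : Function.Involutive (swp i) := by
  intro x; unfold swp; split_ifs <;> omega

lemma swp_self (i : ℕ) : swp i i = i + 2 := by unfold swp; simp

lemma swp_two (i : ℕ) : swp i (i + 2) = i := by unfold swp; split_ifs <;> omega

lemma swp_fix {i x : ℕ} (h1 : x ≠ i) (h2 : x ≠ i + 2) : swp i x = x := by
  unfold swp; split_ifs <;> omega

lemma swp_mono {i x y : ℕ} (hx1 : x ≠ i) (hx2 : x ≠ i + 1) (hy1 : y ≠ i) (hy2 : y ≠ i + 1)
    (hxy : x < y) : swp i x < swp i y := by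
  unfold swp; split_ifs <;> omega

lemma sym2_swp_fix {i : ℕ} {c : Sym2 ℕ} (h1 : i ∉ c) (h2 : i + 2 ∉ c) :
    Sym2.map (swp i) c = c := by
  obtain ⟨a, b, rfl⟩ := sym2_cases c
  rw [Sym2.mem_iff, not_or] at h1 h2
  rw [Sym2.map_pair_eq, swp_fix (Ne.symm h1.1) (Ne.symm h2.1),
    swp_fix (Ne.symm h1.2) (Ne.symm h2.2)]

lemma mem_Vv_singleton {N a b x : ℕ} :
    x ∈ Vv N {s(a, b)} ↔ x ∈ Finset.Icc 1 N ∧ x ≠ a ∧ x ≠ b := by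
  simp [Vv, endpointSet, Set.mem_diff]

variable {N : ℕ} {m m' : MatchingOn (Finset.Icc 1 N)}

lemma removable_adj {i : ℕ} (hmem : s(i, i + 1) ∈ m.chords) : removable m ∅ s(i, i + 1) := by
  refine ⟨hmem, by simp, ?_⟩
  rintro ⟨x, hx, a, b, hab, h1, h2⟩
  rw [Sym2.eq_iff] at hab
  rcases hab with ⟨rfl, rfl⟩ | ⟨rfl, rfl⟩ <;> omega

/-- The main case analysis: a Knuth step induces a correspondence. -/
lemma knuthStep_corr (h : KnuthStep m m') :
    ∃ (c c' : Sym2 ℕ) (σ : ℕ → ℕ),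
      removable m ∅ c ∧ removable m' ∅ c' ∧ Corr N N m m' {c} {c'} σ := by
  have hVmaps : ∀ i, i ∈ Finset.Icc 1 N → i + 2 ∈ Finset.Icc 1 N →
      (∀ x ∈ Vv N {s(i, i+1)}, swp i x ∈ Vv N {s(i+1, i+2)}) := by
    intro i hi hi2 x hx
    rw [mem_Vv_singleton] at hx ⊢
    rw [Finset.mem_Icc] at *
    obtain ⟨⟨hx1, hx2⟩, hx3, hx4⟩ := hx
    unfold swp
    split_ifs <;> exact ⟨⟨by omega, by omega⟩, by omega, by omega⟩
  have hVmaps' : ∀ i, i ∈ Finset.Icc 1 N → i + 2 ∈ Finset.Icc 1 N →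
      (∀ x ∈ Vv N {s(i+1, i+2)}, swp i x ∈ Vv N {s(i, i+1)}) := by
    intro i hi hi2 x hx
    rw [mem_Vv_singleton] at hx ⊢
    rw [Finset.mem_Icc] at *
    obtain ⟨⟨hx1, hx2⟩, hx3, hx4⟩ := hx
    unfold swp
    split_ifs <;> exact ⟨⟨by omega, by omega⟩, by omega, by omega⟩
  have hVmono : ∀ i, (∀ x ∈ Vv N {s(i, i+1)}, ∀ y ∈ Vv N {s(i, i+1)}, x < y →
      swp i x < swp i y) := by
    intro i x hx y hy hxy
    rw [mem_Vv_singleton] at hx hy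
    exact swp_mono hx.2.1 hx.2.2 hy.2.1 hy.2.2 hxy
  rcases h with ⟨i, hmem, hi2, hunm, hch⟩ | ⟨i, j, hj1, hj2, hj3, hmem, hd0, hch⟩
  · -- case (a): unmatched vertex
    have hi : i ∈ Finset.Icc 1 N := m.mem_support _ hmem i (by simp)
    have hi1 : i + 1 ∈ Finset.Icc 1 N := m.mem_support _ hmem (i+1) (by simp)
    have hc' : s(i+1, i+2) ∈ m'.chords := by rw [hch]; exact Finset.mem_insert_self _ _
    have hcc' : s(i, i+1) ≠ s(i+1, i+2) := by rw [Ne, Sym2.eq_iff]; omega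
    have hc'notm : s(i+1, i+2) ∉ m.chords := fun h => hunm _ h (by simp)
    refine ⟨s(i, i+1), s(i+1, i+2), swp i, removable_adj hmem, removable_adj hc', ?_⟩
    refine ⟨swp_invol i, by simpa using hmem, by simpa using hc',
      hVmaps i hi hi2, hVmaps' i hi hi2, hVmono i, ?_⟩
    intro d
    simp only [Finset.mem_singleton]
    constructor
    · rintro ⟨hd, hdc⟩
      have hnd : i ∉ d := m.disj _ hmem d hd (fun he => hdc he.symm) i (by simp)
      have hnd1 : (i+1) ∉ d := m.disj _ hmem d hd (fun he => hdc he.symm) (i+1) (by simp)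
      have hnd2 : (i+2) ∉ d := hunm d hd
      rw [sym2_swp_fix hnd hnd2]
      refine ⟨by rw [hch]; exact Finset.mem_insert_of_mem (Finset.mem_erase.2 ⟨hdc, hd⟩), ?_⟩
      intro he; rw [he] at hnd1; simp at hnd1
    · rintro ⟨hd, hdc⟩
      rw [hch, Finset.mem_insert] at hd
      rcases hd with hd | hd
      · exact absurd hd hdc
      rw [Finset.mem_erase] at hd
      have hnd : i ∉ Sym2.map (swp i) d :=
        m.disj _ hmem _ hd.2 (fun he => hd.1 he.symm) i (by simp)
      have hnd2 : (i+2) ∉ Sym2.map (swp i) d := hunm _ hd.2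
      have hfix : Sym2.map (swp i) (Sym2.map (swp i) d) = Sym2.map (swp i) d :=
        sym2_swp_fix hnd hnd2
      rw [sym2_map_invol (swp_invol i)] at hfix
      rw [hfix]
      exact ⟨hd.2, hd.1⟩
  · -- case (b): chord endpoint
    have hi : i ∈ Finset.Icc 1 N := m.mem_support _ hmem i (by simp)
    have hi1 : i + 1 ∈ Finset.Icc 1 N := m.mem_support _ hmem (i+1) (by simp)
    have hi2 : i + 2 ∈ Finset.Icc 1 N := m.mem_support _ hd0 (i+2) (by simp)
    have hj : j ∈ Finset.Icc 1 N := m.mem_support _ hd0 j (by simp)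
    have hcd0 : s(i, i+1) ≠ s(i+2, j) := by rw [Ne, Sym2.eq_iff]; omega
    have hc' : s(i+1, i+2) ∈ m'.chords := by
      rw [hch]; exact Finset.mem_insert_of_mem (Finset.mem_insert_self _ _)
    refine ⟨s(i, i+1), s(i+1, i+2), swp i, removable_adj hmem, removable_adj hc', ?_⟩
    have hijne : s(i, j) ≠ s(i+1, i+2) := by rw [Ne, Sym2.eq_iff]; omega
    have hd0ne : s(i+2, j) ≠ s(i, i+1) := by rw [Ne, Sym2.eq_iff]; omega
    have hmapd0 : Sym2.map (swp i) s(i+2, j) = s(i, j) := by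
      rw [Sym2.map_pair_eq, swp_two, swp_fix hj1 hj3]
    refine ⟨swp_invol i, by simpa using hmem, by simpa using hc',
      hVmaps i hi hi2, hVmaps' i hi hi2, hVmono i, ?_⟩
    intro d
    simp only [Finset.mem_singleton]
    constructor
    · rintro ⟨hd, hdc⟩
      by_cases hdd0 : d = s(i+2, j)
      · subst hdd0
        rw [hmapd0]
        refine ⟨by rw [hch]; exact Finset.mem_insert_self _ _, hijne⟩
      · have hnd : i ∉ d := m.disj _ hmem d hd (fun he => hdc he.symm) i (by simp)
        have hnd1 : (i+1) ∉ d := m.disj _ hmem d hd (fun he => hdc he.symm) (i+1) (by simp)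
        have hnd2 : (i+2) ∉ d := m.disj _ hd0 d hd (fun he => hdd0 he.symm) (i+2) (by simp)
        rw [sym2_swp_fix hnd hnd2]
        refine ⟨?_, fun he => by rw [he] at hnd1; simp at hnd1⟩
        rw [hch]
        exact Finset.mem_insert_of_mem (Finset.mem_insert_of_mem
          (Finset.mem_erase.2 ⟨hdd0, Finset.mem_erase.2 ⟨hdc, hd⟩⟩))
    · rintro ⟨hd, hdc⟩
      rw [hch, Finset.mem_insert, Finset.mem_insert] at hd
      rcases hd with hd | hd | hd
      · have : d = s(i+2, j) := by
          have h2 := congrArg (Sym2.map (swp i)) hd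
          rw [sym2_map_invol (swp_invol i)] at h2
          rw [h2, Sym2.map_pair_eq, swp_self, swp_fix hj1 hj3]
        subst this
        exact ⟨hd0, hd0ne⟩
      · exact absurd hd hdc
      · rw [Finset.mem_erase, Finset.mem_erase] at hd
        obtain ⟨hne1, hne2, hdm⟩ := hd
        have hnd : i ∉ Sym2.map (swp i) d :=
          m.disj _ hmem _ hdm (fun he => hne2 he.symm) i (by simp)
        have hnd2 : (i+2) ∉ Sym2.map (swp i) d :=
          m.disj _ hd0 _ hdm (fun he => hne1 he.symm) (i+2) (by simp)
        have hfix : Sym2.map (swp i) (Sym2.map (swp i) d) = Sym2.map (swp i) d :=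
          sym2_swp_fix hnd hnd2
        rw [sym2_map_invol (swp_invol i)] at hfix
        rw [hfix]
        exact ⟨hdm, hne2⟩
end

section
variable {N M : ℕ} {m m' : MatchingOn (Finset.Icc 1 N)} {m0 : MatchingOn (Finset.Icc 1 M)}

lemma knuthStep_hasCore (h : KnuthStep m m') (hc : HasCore m m0) : HasCore m' m0 := by
  obtain ⟨c, c', σ, h1, h2, hcorr⟩ := knuthStep_corr h
  exact step_transfer h1 h2 hcorr hc

lemma knuthStep_hasCore' (h : KnuthStep m m') (hc : HasCore m' m0) : HasCore m m0 := by
  obtain ⟨c, c', σ, h1, h2, hcorr⟩ := knuthStep_corr h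
  exact step_transfer h2 h1 hcorr.symm hc

lemma knuthEquiv_hasCore (h : KnuthEquiv m m') (hc : HasCore m m0) : HasCore m' m0 := by
  induction h with
  | refl => exact hc
  | tail _ hstep ih =>
      rcases hstep with hs | hs
      · exact knuthStep_hasCore hs ih
      · exact knuthStep_hasCore' hs ih

lemma forward_dir (h : KnuthEquiv m m') :
    ∃ (M : ℕ) (m0 : MatchingOn (Finset.Icc 1 M)) (L1 L2 : List (Sym2 ℕ)),
      IsMaximalReduction m L1 ∧ IsMaximalReduction m' L2 ∧
      IsCoreVia m L1 m0 ∧ IsCoreVia m' L2 m0 := by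
  obtain ⟨M, m0, hc1⟩ := exists_hasCore m
  have hc2 := knuthEquiv_hasCore h hc1
  obtain ⟨L1, hm1, hv1⟩ := hc1
  obtain ⟨L2, hm2, hv2⟩ := hc2
  exact ⟨M, m0, L1, L2, hm1, hm2, hv1, hv2⟩

lemma strip_transfer {N' : ℕ} {m' : MatchingOn (Finset.Icc 1 N')} {σ : ℕ → ℕ} {c : Sym2 ℕ}
    (hc : removable m ∅ c) (h : Corr N N' m m' {c} ∅ σ) (hm : HasCore m m0) :
    HasCore m' m0 := by
  obtain ⟨L₁, hmax⟩ := exists_maximal_cons hc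
  have hcv : IsCoreVia m (c :: L₁) m0 := hasCore_of_max hm hmax
  have hred : IsReduction m {c} L₁ := by
    have h0 := hmax.1
    cases h0 with
    | cons _ _ _ _ h2 => rwa [show insert _ (∅ : Finset (Sym2 ℕ)) = {_} from rfl] at h2
  obtain ⟨hred', hcorr⟩ := h.reduction hred
  set L₁' := L₁.map (Sym2.map σ) with hL₁'
  have hfin : ({c} : Finset (Sym2 ℕ)) ∪ L₁.toFinset = (c :: L₁).toFinset := by
    ext; simp
  have hfin' : (∅ : Finset (Sym2 ℕ)) ∪ L₁'.toFinset = L₁'.toFinset := by simp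
  rw [hfin, hfin'] at hcorr
  have hmax' : IsMaximalReduction m' L₁' := by
    refine ⟨hred', fun d hd => hmax.2 _ (hcorr.symm.removable_map hd)⟩
  exact ⟨L₁', hmax', hcorr.core hcv⟩
end

section
variable {P : ℕ}

/-- Extend a matching on `[P]` with a top short chord `(P+1, P+2)`. -/
def extM (mh : MatchingOn (Finset.Icc 1 P)) : MatchingOn (Finset.Icc 1 (P + 2)) where
  chords := insert s(P+1, P+2) mh.chords
  not_diag := by
    intro c hc
    rcases Finset.mem_insert.1 hc with rfl | hc
    · rw [Sym2.isDiag_iff_proj_eq]; omega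
    · exact mh.not_diag c hc
  mem_support := by
    intro c hc x hx
    rcases Finset.mem_insert.1 hc with rfl | hc
    · rcases Sym2.mem_iff.1 hx with rfl | rfl <;> simp [Finset.mem_Icc] <;> omega
    · have := mh.mem_support c hc x hx
      rw [Finset.mem_Icc] at *
      omega
  disj := by
    have hold : ∀ c ∈ mh.chords, ∀ x ∈ c, x ≤ P := by
      intro c hc x hx
      have := mh.mem_support c hc x hx
      rw [Finset.mem_Icc] at this
      omega
    intro c hc c' hc' hne x hx hx'
    rcases Finset.mem_insert.1 hc with rfl | hc <;> rcases Finset.mem_insert.1 hc' with rfl | hc'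
    · exact hne rfl
    · have := hold c' hc' x hx'
      rcases Sym2.mem_iff.1 hx with rfl | rfl <;> omega
    · have := hold c hc x hx
      rcases Sym2.mem_iff.1 hx' with rfl | rfl <;> omega
    · exact mh.disj c hc c' hc' hne x hx hx'

lemma extM_top_ne {mh : MatchingOn (Finset.Icc 1 P)} {c : Sym2 ℕ} (hc : c ∈ mh.chords) :
    s(P+1, P+2) ≠ c := by
  intro he
  have : (P+1 : ℕ) ∈ c := he ▸ (by simp)
  have := mh.mem_support c hc _ this
  rw [Finset.mem_Icc] at this
  omega

lemma lift_step {mh mh' : MatchingOn (Finset.Icc 1 P)} (h : KnuthStep mh mh') :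
    KnuthStep (extM mh) (extM mh') := by
  have hold : ∀ c ∈ mh.chords, ∀ x ∈ c, x ≤ P := by
    intro c hc x hx
    have := mh.mem_support c hc x hx
    rw [Finset.mem_Icc] at this
    omega
  rcases h with ⟨i, hmem, hi2, hunm, hch⟩ | ⟨i, j, hj1, hj2, hj3, hmem, hd0, hch⟩
  · left
    refine ⟨i, Finset.mem_insert_of_mem hmem, ?_, ?_, ?_⟩
    · rw [Finset.mem_Icc] at hi2 ⊢; omega
    · intro c hc
      rcases Finset.mem_insert.1 hc with rfl | hc
      · rw [Finset.mem_Icc] at hi2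
        rw [Sym2.mem_iff]
        omega
      · exact hunm c hc
    · show insert s(P+1, P+2) mh'.chords =
        insert s(i+1, i+2) ((insert s(P+1, P+2) mh.chords).erase s(i, i+1))
      have hne := extM_top_ne hmem
      ext x
      rw [hch]
      simp only [Finset.mem_insert, Finset.mem_erase]
      constructor
      · rintro (rfl | rfl | ⟨h1, h2⟩)
        · exact Or.inr ⟨hne, Or.inl rfl⟩
        · exact Or.inl rfl
        · exact Or.inr ⟨h1, Or.inr h2⟩
      · rintro (rfl | ⟨h1, rfl | h2⟩)
        · exact Or.inr (Or.inl rfl)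
        · exact Or.inl rfl
        · exact Or.inr (Or.inr ⟨h1, h2⟩)
  · right
    refine ⟨i, j, hj1, hj2, hj3, Finset.mem_insert_of_mem hmem,
      Finset.mem_insert_of_mem hd0, ?_⟩
    show insert s(P+1, P+2) mh'.chords = insert s(i, j) (insert s(i+1, i+2)
      (((insert s(P+1, P+2) mh.chords).erase s(i, i+1)).erase s(i+2, j)))
    have hne1 := extM_top_ne hmem
    have hne2 := extM_top_ne hd0
    ext x
    rw [hch]
    simp only [Finset.mem_insert, Finset.mem_erase]
    constructor
    · rintro (rfl | rfl | rfl | ⟨h1, h2, h3⟩)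
      · exact Or.inr (Or.inr ⟨hne2, hne1, Or.inl rfl⟩)
      · exact Or.inl rfl
      · exact Or.inr (Or.inl rfl)
      · exact Or.inr (Or.inr ⟨h1, h2, Or.inr h3⟩)
    · rintro (rfl | rfl | ⟨h1, h2, rfl | h3⟩)
      · exact Or.inr (Or.inl rfl)
      · exact Or.inr (Or.inr (Or.inl rfl))
      · exact Or.inl rfl
      · exact Or.inr (Or.inr (Or.inr ⟨h1, h2, h3⟩))

lemma lift_equiv {mh mh' : MatchingOn (Finset.Icc 1 P)} (h : KnuthEquiv mh mh') :
    KnuthEquiv (extM mh) (extM mh') := by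
  induction h with
  | refl => exact Relation.ReflTransGen.refl
  | tail _ hstep ih =>
      refine Relation.ReflTransGen.tail ih ?_
      rcases hstep with hs | hs
      · exact Or.inl (lift_step hs)
      · exact Or.inr (lift_step hs)
end

section
variable {M : ℕ}

/-- The normal form: the core pattern on `[M]`, padded with short chords at the top. -/
def nfM (m0 : MatchingOn (Finset.Icc 1 M)) (N : ℕ) (h : M ≤ N) :
    MatchingOn (Finset.Icc 1 N) where
  chords := m0.chords ∪ (Finset.range ((N - M) / 2)).image (fun j => s(N - 2*j - 1, N - 2*j))
  not_diag := by
    intro c hc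
    rcases Finset.mem_union.1 hc with hc | hc
    · exact m0.not_diag c hc
    · obtain ⟨j, hj, rfl⟩ := Finset.mem_image.1 hc
      rw [Finset.mem_range] at hj
      rw [Sym2.isDiag_iff_proj_eq]
      omega
  mem_support := by
    intro c hc x hx
    rcases Finset.mem_union.1 hc with hc | hc
    · have := m0.mem_support c hc x hx
      rw [Finset.mem_Icc] at this ⊢
      omega
    · obtain ⟨j, hj, rfl⟩ := Finset.mem_image.1 hc
      rw [Finset.mem_range] at hj
      rw [Finset.mem_Icc]
      rcases Sym2.mem_iff.1 hx with rfl | rfl <;> omega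
  disj := by
    have hcore : ∀ c ∈ m0.chords, ∀ x ∈ c, x ≤ M := by
      intro c hc x hx
      have := m0.mem_support c hc x hx
      rw [Finset.mem_Icc] at this
      omega
    intro c hc c' hc' hne x hx hx'
    rcases Finset.mem_union.1 hc with hc | hc <;> rcases Finset.mem_union.1 hc' with hc' | hc'
    · exact m0.disj c hc c' hc' hne x hx hx'
    · obtain ⟨j, hj, rfl⟩ := Finset.mem_image.1 hc'
      rw [Finset.mem_range] at hj
      have := hcore c hc x hx
      rcases Sym2.mem_iff.1 hx' with rfl | rfl <;> omega
    · obtain ⟨j, hj, rfl⟩ := Finset.mem_image.1 hc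
      rw [Finset.mem_range] at hj
      have := hcore c' hc' x hx'
      rcases Sym2.mem_iff.1 hx with rfl | rfl <;> omega
    · obtain ⟨j, hj, rfl⟩ := Finset.mem_image.1 hc
      obtain ⟨j', hj', rfl⟩ := Finset.mem_image.1 hc'
      rw [Finset.mem_range] at hj hj'
      have hjj : j ≠ j' := by
        intro he
        exact hne (by rw [he])
      rcases Sym2.mem_iff.1 hx with rfl | rfl <;>
        rcases Sym2.mem_iff.1 hx' with he | he <;> omega

lemma nfM_self (m0 : MatchingOn (Finset.Icc 1 M)) : (nfM m0 M le_rfl).chords = m0.chords := by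
  show m0.chords ∪ _ = m0.chords
  simp

lemma nfM_succ {P : ℕ} (m0 : MatchingOn (Finset.Icc 1 M)) (h : M ≤ P) :
    nfM m0 (P + 2) (by omega) = extM (nfM m0 P h) := by
  apply matching_ext
  show m0.chords ∪ (Finset.range ((P + 2 - M) / 2)).image
      (fun j => s(P + 2 - 2*j - 1, P + 2 - 2*j)) =
    insert s(P+1, P+2) (m0.chords ∪ (Finset.range ((P - M) / 2)).image
      (fun j => s(P - 2*j - 1, P - 2*j)))
  have hk : (P + 2 - M) / 2 = (P - M) / 2 + 1 := by omega
  rw [hk]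
  ext c
  simp only [Finset.mem_union, Finset.mem_image, Finset.mem_range, Finset.mem_insert]
  constructor
  · rintro (hc | ⟨j, hj, rfl⟩)
    · exact Or.inr (Or.inl hc)
    · rcases Nat.eq_zero_or_pos j with rfl | hpos
      · left
        have e1 : P + 2 - 2*0 - 1 = P + 1 := by omega
        have e2 : P + 2 - 2*0 = P + 2 := by omega
        rw [e1, e2]
      · right; right
        refine ⟨j - 1, by omega, ?_⟩
        have e1 : P - 2*(j-1) - 1 = P + 2 - 2*j - 1 := by omega
        have e2 : P - 2*(j-1) = P + 2 - 2*j := by omega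
        rw [e1, e2]
  · rintro (rfl | hc | ⟨j, hj, rfl⟩)
    · right
      refine ⟨0, by omega, ?_⟩
      have e1 : P + 2 - 2*0 - 1 = P + 1 := by omega
      have e2 : P + 2 - 2*0 = P + 2 := by omega
      rw [e1, e2]
    · exact Or.inl hc
    · right
      refine ⟨j + 1, by omega, ?_⟩
      have e1 : P + 2 - 2*(j+1) - 1 = P - 2*j - 1 := by omega
      have e2 : P + 2 - 2*(j+1) = P - 2*j := by omega
      rw [e1, e2]
end

section
variable {N : ℕ} {m : MatchingOn (Finset.Icc 1 N)}

lemma mem_sym2_other {a : ℕ} {d : Sym2 ℕ} (h : a ∈ d) : ∃ b, d = s(a, b) := by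
  obtain ⟨u, v, rfl⟩ := sym2_cases d
  rcases Sym2.mem_iff.1 h with rfl | rfl
  · exact ⟨v, rfl⟩
  · exact ⟨u, Sym2.eq_swap.symm⟩

lemma transport_step {i : ℕ} (hmem : s(i, i+1) ∈ m.chords) (hle : i + 2 ≤ N) :
    ∃ m' : MatchingOn (Finset.Icc 1 N), KnuthStep m m' ∧ s(i+1, i+2) ∈ m'.chords := by
  classical
  have hiI : i ∈ Finset.Icc 1 N := m.mem_support _ hmem i (by simp)
  rw [Finset.mem_Icc] at hiI
  by_cases hex : ∃ d ∈ m.chords, (i+2) ∈ d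
  · obtain ⟨d, hd, hid⟩ := hex
    obtain ⟨j, rfl⟩ := mem_sym2_other hid
    have hdc : s(i+2, j) ≠ s(i, i+1) := by
      rw [Ne, Sym2.eq_iff]; omega
    have hj3 : j ≠ i + 2 := by
      intro he
      exact m.not_diag _ hd (by rw [Sym2.isDiag_iff_proj_eq]; exact he.symm)
    have hj1 : j ≠ i := by
      intro he
      exact m.disj _ hmem _ hd (Ne.symm hdc) i (by simp) (by simp [Sym2.mem_iff, he.symm])
    have hj2 : j ≠ i + 1 := by
      intro he
      exact m.disj _ hmem _ hd (Ne.symm hdc) (i+1) (by simp) (by simp [Sym2.mem_iff, he.symm])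
    set rest := (m.chords.erase s(i, i+1)).erase s(i+2, j) with hrest
    have hrest_mem : ∀ e ∈ rest, e ∈ m.chords ∧ e ≠ s(i, i+1) ∧ e ≠ s(i+2, j) := by
      intro e he
      rw [hrest, Finset.mem_erase, Finset.mem_erase] at he
      tauto
    have havoid : ∀ e ∈ rest, i ∉ e ∧ (i+1) ∉ e ∧ (i+2) ∉ e ∧ j ∉ e := by
      intro e he
      obtain ⟨hem, hne1, hne2⟩ := hrest_mem e he
      exact ⟨m.disj _ hmem _ hem (Ne.symm hne1) i (by simp),
             m.disj _ hmem _ hem (Ne.symm hne1) (i+1) (by simp),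
             m.disj _ hd _ hem (Ne.symm hne2) (i+2) (by simp),
             m.disj _ hd _ hem (Ne.symm hne2) j (by simp)⟩
    have hjI : j ∈ Finset.Icc 1 N := m.mem_support _ hd j (by simp)
    refine ⟨⟨insert s(i,j) (insert s(i+1,i+2) rest), ?_, ?_, ?_⟩, ?_, ?_⟩
    · intro c hc
      rcases Finset.mem_insert.1 hc with rfl | hc
      · rw [Sym2.isDiag_iff_proj_eq]; exact fun h => hj1 h.symm
      rcases Finset.mem_insert.1 hc with rfl | hc
      · rw [Sym2.isDiag_iff_proj_eq]; omega
      · exact m.not_diag _ (hrest_mem _ hc).1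
    · intro c hc x hx
      rcases Finset.mem_insert.1 hc with rfl | hc
      · rcases Sym2.mem_iff.1 hx with rfl | rfl
        · exact Finset.mem_Icc.2 ⟨by omega, by omega⟩
        · exact hjI
      rcases Finset.mem_insert.1 hc with rfl | hc
      · rcases Sym2.mem_iff.1 hx with rfl | rfl <;>
          exact Finset.mem_Icc.2 ⟨by omega, by omega⟩
      · exact m.mem_support _ (hrest_mem _ hc).1 x hx
    · intro c1 h1 c2 h2 hne x hx1 hx2
      rcases Finset.mem_insert.1 h1 with rfl | h1
      · rcases Finset.mem_insert.1 h2 with rfl | h2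
        · exact hne rfl
        rcases Finset.mem_insert.1 h2 with rfl | h2
        · rcases Sym2.mem_iff.1 hx1 with rfl | rfl <;>
            rcases Sym2.mem_iff.1 hx2 with he | he <;> omega
        · obtain ⟨ha1, ha2, ha3, ha4⟩ := havoid _ h2
          rcases Sym2.mem_iff.1 hx1 with rfl | rfl
          · exact ha1 hx2
          · exact ha4 hx2
      rcases Finset.mem_insert.1 h1 with rfl | h1
      · rcases Finset.mem_insert.1 h2 with rfl | h2
        · rcases Sym2.mem_iff.1 hx1 with rfl | rfl <;>
            rcases Sym2.mem_iff.1 hx2 with he | he <;> omega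
        rcases Finset.mem_insert.1 h2 with rfl | h2
        · exact hne rfl
        · obtain ⟨ha1, ha2, ha3, ha4⟩ := havoid _ h2
          rcases Sym2.mem_iff.1 hx1 with rfl | rfl
          · exact ha2 hx2
          · exact ha3 hx2
      · obtain ⟨ha1, ha2, ha3, ha4⟩ := havoid _ h1
        rcases Finset.mem_insert.1 h2 with rfl | h2
        · rcases Sym2.mem_iff.1 hx2 with rfl | rfl
          · exact ha1 hx1
          · exact ha4 hx1
        rcases Finset.mem_insert.1 h2 with rfl | h2
        · rcases Sym2.mem_iff.1 hx2 with rfl | rfl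
          · exact ha2 hx1
          · exact ha3 hx1
        · exact m.disj _ (hrest_mem _ h1).1 _ (hrest_mem _ h2).1 hne x hx1 hx2
    · right
      exact ⟨i, j, hj1, hj2, hj3, hmem, hd, rfl⟩
    · exact Finset.mem_insert_of_mem (Finset.mem_insert_self _ _)
  · push_neg at hex
    set rest := m.chords.erase s(i, i+1) with hrest
    have hrest_mem : ∀ e ∈ rest, e ∈ m.chords ∧ e ≠ s(i, i+1) := by
      intro e he
      rw [hrest, Finset.mem_erase] at he
      tauto
    have havoid : ∀ e ∈ rest, i ∉ e ∧ (i+1) ∉ e ∧ (i+2) ∉ e := by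
      intro e he
      obtain ⟨hem, hne1⟩ := hrest_mem e he
      exact ⟨m.disj _ hmem _ hem (Ne.symm hne1) i (by simp),
             m.disj _ hmem _ hem (Ne.symm hne1) (i+1) (by simp),
             hex e hem⟩
    refine ⟨⟨insert s(i+1, i+2) rest, ?_, ?_, ?_⟩, ?_, Finset.mem_insert_self _ _⟩
    · intro c hc
      rcases Finset.mem_insert.1 hc with rfl | hc
      · rw [Sym2.isDiag_iff_proj_eq]; omega
      · exact m.not_diag _ (hrest_mem _ hc).1
    · intro c hc x hx
      rcases Finset.mem_insert.1 hc with rfl | hc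
      · rcases Sym2.mem_iff.1 hx with rfl | rfl <;>
          exact Finset.mem_Icc.2 ⟨by omega, by omega⟩
      · exact m.mem_support _ (hrest_mem _ hc).1 x hx
    · intro c1 h1 c2 h2 hne x hx1 hx2
      rcases Finset.mem_insert.1 h1 with rfl | h1
      · rcases Finset.mem_insert.1 h2 with rfl | h2
        · exact hne rfl
        · obtain ⟨ha1, ha2, ha3⟩ := havoid _ h2
          rcases Sym2.mem_iff.1 hx1 with rfl | rfl
          · exact ha2 hx2
          · exact ha3 hx2
      · rcases Finset.mem_insert.1 h2 with rfl | h2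
        · obtain ⟨ha1, ha2, ha3⟩ := havoid _ h1
          rcases Sym2.mem_iff.1 hx2 with rfl | rfl
          · exact ha2 hx1
          · exact ha3 hx1
        · exact m.disj _ (hrest_mem _ h1).1 _ (hrest_mem _ h2).1 hne x hx1 hx2
    · left
      exact ⟨i, hmem, Finset.mem_Icc.2 ⟨by omega, hle⟩, hex, rfl⟩

lemma transport {i : ℕ} (hmem : s(i, i+1) ∈ m.chords) :
    ∃ mt : MatchingOn (Finset.Icc 1 N), KnuthEquiv m mt ∧ s(N-1, N) ∈ mt.chords := by
  have key : ∀ k (m : MatchingOn (Finset.Icc 1 N)) i, N - i ≤ k → s(i, i+1) ∈ m.chords →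
      ∃ mt, KnuthEquiv m mt ∧ s(N-1, N) ∈ mt.chords := by
    intro k
    induction k with
    | zero =>
        intro m i hk hmem
        exfalso
        have := m.mem_support _ hmem (i+1) (by simp)
        rw [Finset.mem_Icc] at this
        omega
    | succ k ih =>
        intro m i hk hmem
        have hi1 : i + 1 ≤ N := by
          have := m.mem_support _ hmem (i+1) (by simp)
          rw [Finset.mem_Icc] at this
          omega
        by_cases hle : i + 2 ≤ N
        · obtain ⟨m', hstep, hmem'⟩ := transport_step hmem hle
          obtain ⟨mt, hequiv, hfin⟩ := ih m' (i+1) (by omega) hmem'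
          exact ⟨mt, Relation.ReflTransGen.head (Or.inl hstep) hequiv, hfin⟩
        · have e1 : N - 1 = i := by omega
          have e2 : N = i + 1 := by omega
          have hchord : s(N-1, N) = s(i, i+1) := by rw [e1, e2]
          exact ⟨m, Relation.ReflTransGen.refl, by rw [hchord]; exact hmem⟩
  exact key (N - i) m i (by omega) hmem
end

section
variable {N : ℕ} {m : MatchingOn (Finset.Icc 1 N)}

lemma stableSet_nil : stableSet N ([] : List (Sym2 ℕ)) = ↑(Finset.Icc 1 N) := by
  rw [stableSet]
  simp [endpointSet]

lemma removable_empty_short {c : Sym2 ℕ} (hc : removable m ∅ c) :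
    ∃ i, c = s(i, i+1) := by
  obtain ⟨a, b, rfl⟩ := sym2_cases c
  have hne : a ≠ b := by
    intro he
    exact m.not_diag _ hc.1 (by rw [Sym2.isDiag_iff_proj_eq]; exact he)
  have haI := m.mem_support _ hc.1 a (by simp)
  have hbI := m.mem_support _ hc.1 b (by simp)
  rw [Finset.mem_Icc] at haI hbI
  have hbtwn := hc.2.2
  have hT : ∀ x : ℕ, 1 ≤ x → x ≤ N →
      x ∈ ((Finset.Icc 1 N : Finset ℕ) : Set ℕ) \ endpointSet ∅ := by
    intro x h1 h2
    refine ⟨?_, by rw [endpointSet_empty]; exact Set.notMem_empty x⟩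
    exact_mod_cast Finset.mem_Icc.2 ⟨h1, h2⟩
  rcases Nat.lt_or_ge a b with hab | hab
  · have hb' : b = a + 1 := by
      by_contra h'
      have h2 : a + 1 < b := by omega
      exact hbtwn ⟨a+1, hT (a+1) (by omega) (by omega), a, b, rfl, by omega, h2⟩
    exact ⟨a, by rw [hb']⟩
  · have hba : b < a := by omega
    have ha' : a = b + 1 := by
      by_contra h'
      have h2 : b + 1 < a := by omega
      exact hbtwn ⟨b+1, hT (b+1) (by omega) (by omega), b, a, Sym2.eq_swap, by omega, h2⟩
    exact ⟨b, by rw [ha']; exact Sym2.eq_swap⟩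

theorem toNF (N : ℕ) : ∀ {M : ℕ} (m : MatchingOn (Finset.Icc 1 N))
    (m0 : MatchingOn (Finset.Icc 1 M)) (hMN : M ≤ N),
    HasCore m m0 → KnuthEquiv m (nfM m0 N hMN) := by
  induction N using Nat.strong_induction_on with
  | _ N ih =>
    intro M m m0 hMN hcore
    obtain ⟨L, hmax, hcv⟩ := hcore
    cases L with
    | nil =>
        have hMeq : M = N := by
          have := coreVia_M_eq hcv
          rwa [stableSet_nil, ncard_Icc_coe] at this
        subst hMeq
        obtain ⟨φ, h1, h2, h3⟩ := hcv
        rw [stableSet_nil] at h1 h2 h3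
        have hid : ∀ x ∈ (↑(Finset.Icc 1 M) : Set ℕ), φ x = x :=
          mono_bij_unique (Finset.Icc 1 M).finite_toSet (Finset.Icc 1 M).finite_toSet
            h1 (Set.bijOn_id _) h2 (fun x _ y _ h => h)
        have hchords : m.chords = (nfM m0 M hMN).chords := by
          show m.chords = m0.chords ∪ _
          have hpad : (M - M) / 2 = 0 := by omega
          rw [hpad]
          simp only [Finset.range_zero, Finset.image_empty, Finset.union_empty]
          ext c
          obtain ⟨a, b, rfl⟩ := sym2_cases c
          constructor
          · intro hc
            have ha := Finset.mem_coe.2 (m.mem_support _ hc a (by simp))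
            have hb := Finset.mem_coe.2 (m.mem_support _ hc b (by simp))
            have := (h3 a b ha hb).1 hc
            rwa [hid a ha, hid b hb] at this
          · intro hc
            have ha := Finset.mem_coe.2 (m0.mem_support _ hc a (by simp))
            have hb := Finset.mem_coe.2 (m0.mem_support _ hc b (by simp))
            exact (h3 a b ha hb).2 (by rwa [hid a ha, hid b hb])
        rw [matching_ext hchords]
        exact Relation.ReflTransGen.refl
    | cons c L₁ =>
        have hrem : removable m ∅ c := by
          cases hmax.1 with
          | cons _ _ _ h _ => exact h
        obtain ⟨i, rfl⟩ := removable_empty_short hrem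
        obtain ⟨mt, hequiv, htop⟩ := transport hrem.1
        have hcoret : HasCore mt m0 := knuthEquiv_hasCore hequiv ⟨_, hmax, hcv⟩
        have hN2 : 2 ≤ N := by
          have := mt.mem_support _ htop (N-1) (by simp)
          rw [Finset.mem_Icc] at this
          omega
        obtain ⟨P, rfl⟩ : ∃ P, N = P + 2 := ⟨N - 2, by omega⟩
        have htop' : s(P+1, P+2) ∈ mt.chords := htop
        have htopne : ∀ e ∈ mt.chords.erase s(P+1, P+2), (P+1) ∉ e ∧ (P+2) ∉ e := by
          intro e he
          rw [Finset.mem_erase] at he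
          exact ⟨mt.disj _ htop' _ he.2 (Ne.symm he.1) (P+1) (by simp),
                 mt.disj _ htop' _ he.2 (Ne.symm he.1) (P+2) (by simp)⟩
        have hsupport : ∀ e ∈ mt.chords.erase s(P+1, P+2), ∀ x ∈ e, x ∈ Finset.Icc 1 P := by
          intro e he x hx
          have h1 := mt.mem_support _ (Finset.mem_erase.1 he).2 x hx
          obtain ⟨hp1, hp2⟩ := htopne e he
          have hx1 : x ≠ P + 1 := fun he2 => hp1 (he2 ▸ hx)
          have hx2 : x ≠ P + 2 := fun he2 => hp2 (he2 ▸ hx)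
          rw [Finset.mem_Icc] at h1 ⊢
          omega
        set mhat : MatchingOn (Finset.Icc 1 P) :=
          { chords := mt.chords.erase s(P+1, P+2)
            not_diag := fun c hc => mt.not_diag c (Finset.mem_erase.1 hc).2
            mem_support := hsupport
            disj := fun c hc c' hc' =>
              mt.disj c (Finset.mem_erase.1 hc).2 c' (Finset.mem_erase.1 hc').2 } with hmhat
        have hext : extM mhat = mt := by
          apply matching_ext
          show insert s(P+1, P+2) (mt.chords.erase s(P+1, P+2)) = mt.chords
          exact Finset.insert_erase htop'
        have hcorr : Corr (P+2) P mt mhat {s(P+1, P+2)} ∅ id := by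
          refine ⟨fun x => rfl, Finset.singleton_subset_iff.2 htop', Finset.empty_subset _,
            ?_, ?_, fun x _ y _ h => h, ?_⟩
          · intro x hx
            rw [mem_Vv_singleton] at hx
            obtain ⟨hxI, hx1, hx2⟩ := hx
            rw [Finset.mem_Icc] at hxI
            show x ∈ Vv P ∅
            have hxP : x ∈ Finset.Icc 1 P := Finset.mem_Icc.2 ⟨by omega, by omega⟩
            exact ⟨Finset.mem_coe.2 hxP, by rw [endpointSet_empty]; exact Set.notMem_empty _⟩
          · intro y hy
            obtain ⟨hyI, -⟩ := hy
            rw [Finset.mem_coe, Finset.mem_Icc] at hyI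
            show y ∈ Vv (P+2) {s(P+1, P+2)}
            rw [mem_Vv_singleton]
            exact ⟨Finset.mem_Icc.2 ⟨by omega, by omega⟩, by omega, by omega⟩
          · intro d
            have hmid : Sym2.map id d = d := by
              obtain ⟨a, b, rfl⟩ := sym2_cases d
              rw [Sym2.map_pair_eq, id_eq, id_eq]
            rw [hmid]
            simp only [Finset.mem_singleton, Finset.notMem_empty, not_false_iff, and_true]
            constructor
            · rintro ⟨hd, hdc⟩
              show d ∈ mt.chords.erase s(P+1, P+2)
              exact Finset.mem_erase.2 ⟨hdc, hd⟩
            · intro hd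
              have hd' : d ∈ mt.chords.erase s(P+1, P+2) := hd
              rw [Finset.mem_erase] at hd'
              exact ⟨hd'.2, hd'.1⟩
        have hremtop : removable mt ∅ s(P+1, P+1+1) := removable_adj htop'
        have hcorehat : HasCore mhat m0 := strip_transfer hremtop hcorr hcoret
        have hMP : M ≤ P := hasCore_M_le hcorehat
        have hih := ih P (by omega) mhat m0 hMP hcorehat
        have hlift := lift_equiv hih
        rw [hext] at hlift
        rw [nfM_succ m0 hMP]
        exact hequiv.trans hlift

end


/-- Two matchings on `[N]` are Knuth-like equivalent if and only if they have the
same core. -/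
theorem stmt15 (N : ℕ) (m1 m2 : MatchingOn (Finset.Icc 1 N)) :
    KnuthEquiv m1 m2 ↔
      ∃ (M : ℕ) (m0 : MatchingOn (Finset.Icc 1 M)) (L1 L2 : List (Sym2 ℕ)),
        IsMaximalReduction m1 L1 ∧ IsMaximalReduction m2 L2 ∧
        IsCoreVia m1 L1 m0 ∧ IsCoreVia m2 L2 m0 := by
  constructor
  · exact forward_dir
  · rintro ⟨M, m0, L1, L2, hm1, hm2, hv1, hv2⟩
    have hc1 : HasCore m1 m0 := ⟨L1, hm1, hv1⟩
    have hc2 : HasCore m2 m0 := ⟨L2, hm2, hv2⟩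
    have hMN : M ≤ N := hasCore_M_le hc1
    have h1 := toNF N m1 m0 hMN hc1
    have h2 := toNF N m2 m0 hMN hc2
    have hsym : Symmetric (fun a b : MatchingOn (Finset.Icc 1 N) =>
        KnuthStep a b ∨ KnuthStep b a) := fun a b h => h.symm
    exact h1.trans ((@Relation.ReflTransGen.symmetric _ _ ⟨fun a b h => hsym h⟩).symm _ _ h2)
end

section
/- For any matching m on [N-2] and any indices 1 ≤ i, j ≤ N-1, the matchings insert_i(m) and insert_j(m) on [N] are Knuth-like equivalent. -/
/-- `insertChords i C`: insert a new short chord `(i, i+1)`, shifting all vertices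
`≥ i` up by `2`. -/
def insertChords (i : ℕ) (C : Finset (Sym2 ℕ)) : Finset (Sym2 ℕ) :=
  insert s(i, i + 1) (C.image (Sym2.map fun x => if x < i then x else x + 2))

-- auxiliary development
def fS (k : ℕ) : ℕ → ℕ := fun x => if x < k then x else x + 2

lemma fS_inj (k : ℕ) : Function.Injective (fS k) := by
  intro a b h; unfold fS at h; split_ifs at h <;> omega

lemma fS_lt_or_ge (k x : ℕ) : fS k x < k ∨ k + 2 ≤ fS k x := by
  unfold fS; split_ifs with h <;> omega

lemma fS_eq_kp2 {k x : ℕ} (h : fS k x = k + 2) : x = k := by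
  unfold fS at h; split_ifs at h <;> omega

lemma insertChords_eq (k : ℕ) (C : Finset (Sym2 ℕ)) :
    insertChords k C = insert s(k, k + 1) (C.image (Sym2.map (fS k))) := rfl

lemma MatchingOn.ext' {S : Finset ℕ} {a b : MatchingOn S} (h : a.chords = b.chords) :
    a = b := by
  cases a; cases b; cases h; rfl

/-- endpoints of image chords avoid k and k+1 -/
lemma mem_map_fS {k x : ℕ} {d : Sym2 ℕ} (hx : x ∈ Sym2.map (fS k) d) :
    x < k ∨ k + 2 ≤ x := by
  obtain ⟨y, _, rfl⟩ := Sym2.mem_map.mp hx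
  exact fS_lt_or_ge k y

lemma short_not_mem_image {k : ℕ} {C : Finset (Sym2 ℕ)} :
    s(k, k + 1) ∉ C.image (Sym2.map (fS k)) := by
  intro h
  obtain ⟨d, _, hd⟩ := Finset.mem_image.mp h
  have : k ∈ Sym2.map (fS k) d := by rw [hd]; simp
  rcases mem_map_fS this with h | h <;> omega

def insM (N k : ℕ) (hk1 : 1 ≤ k) (hkN : k ≤ N - 1) (hN : 2 ≤ N)
    (m : MatchingOn (Finset.Icc 1 (N - 2))) : MatchingOn (Finset.Icc 1 N) where
  chords := insertChords k m.chords
  not_diag := by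
    intro c hc
    rw [insertChords_eq] at hc
    rcases Finset.mem_insert.mp hc with rfl | hc
    · simp [Sym2.mk_isDiag_iff]
    · obtain ⟨d, hd, rfl⟩ := Finset.mem_image.mp hc
      intro hdiag
      induction d using Sym2.ind with
      | _ a b =>
        rw [Sym2.map_pair_eq, Sym2.mk_isDiag_iff] at hdiag
        exact m.not_diag _ hd (Sym2.mk_isDiag_iff.mpr (fS_inj k hdiag))
  mem_support := by
    intro c hc x hx
    rw [insertChords_eq] at hc
    simp only [Finset.mem_Icc]
    rcases Finset.mem_insert.mp hc with rfl | hc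
    · rcases Sym2.mem_iff.mp hx with rfl | rfl <;> omega
    · obtain ⟨d, hd, rfl⟩ := Finset.mem_image.mp hc
      obtain ⟨y, hy, rfl⟩ := Sym2.mem_map.mp hx
      have := Finset.mem_Icc.mp (m.mem_support d hd y hy)
      unfold fS; split_ifs <;> omega
  disj := by
    intro c hc c' hc' hne x hx hx'
    rw [insertChords_eq] at hc hc'
    rcases Finset.mem_insert.mp hc with rfl | hc
    · rcases Finset.mem_insert.mp hc' with rfl | hc'
      · exact hne rfl
      · obtain ⟨d, hd, rfl⟩ := Finset.mem_image.mp hc'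
        rcases mem_map_fS hx' with h | h <;>
          rcases Sym2.mem_iff.mp hx with rfl | rfl <;> omega
    · obtain ⟨d, hd, rfl⟩ := Finset.mem_image.mp hc
      rcases Finset.mem_insert.mp hc' with rfl | hc'
      · rcases mem_map_fS hx with h | h <;>
          rcases Sym2.mem_iff.mp hx' with rfl | rfl <;> omega
      · obtain ⟨d', hd', rfl⟩ := Finset.mem_image.mp hc'
        have hdd : d ≠ d' := fun h => hne (by rw [h])
        obtain ⟨y, hy, rfl⟩ := Sym2.mem_map.mp hx
        obtain ⟨y', hy', hyy⟩ := Sym2.mem_map.mp hx'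
        have := fS_inj k hyy
        exact m.disj d hd d' hd' hdd y hy (this ▸ hy')

lemma step_adj (N k : ℕ) (hk1 : 1 ≤ k) (hk : k + 1 ≤ N - 1) (hN : 2 ≤ N)
    (m : MatchingOn (Finset.Icc 1 (N - 2)))
    (ma mb : MatchingOn (Finset.Icc 1 N))
    (ha : ma.chords = insertChords k m.chords)
    (hb : mb.chords = insertChords (k + 1) m.chords) :
    KnuthStep ma mb := by
  rw [insertChords_eq] at ha hb
  have hshort : s(k, k + 1) ∈ ma.chords := by rw [ha]; exact Finset.mem_insert_self _ _
  by_cases hmat : ∃ c ∈ m.chords, k ∈ c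
  · -- k is matched in m: second kind of step
    obtain ⟨c, hc, hkc⟩ := hmat
    induction c using Sym2.ind with
    | _ a b =>
      -- normalize so that c = s(k, l)
      wlog hak : a = k generalizing a b
      · exact this b a (Sym2.eq_swap ▸ hc) (Sym2.eq_swap ▸ hkc)
          ((Sym2.mem_iff.mp hkc).resolve_left (fun h => hak h.symm)).symm
      subst hak
      set l := b with hl
      have hlk : l ≠ a := fun h => m.not_diag _ hc (Sym2.mk_isDiag_iff.mpr h.symm)
      have hlI := Finset.mem_Icc.mp (m.mem_support _ hc l (by simp))
      set lh := fS a l with hlh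
      have hlhprop : lh < a ∨ a + 3 ≤ lh := by
        rw [hlh]; unfold fS; split_ifs <;> omega
      right
      refine ⟨a, lh, by omega, by omega, by omega, hshort, ?_, ?_⟩
      · rw [ha]
        apply Finset.mem_insert_of_mem
        refine Finset.mem_image.mpr ⟨s(a, l), hc, ?_⟩
        rw [Sym2.map_pair_eq]
        have h1 : fS a a = a + 2 := by unfold fS; simp
        rw [h1, ← hlh]
      · -- chord set equality
        rw [ha, hb]
        -- erase the short chord
        rw [Finset.erase_insert short_not_mem_image]
        -- pull s(a,l) out of the image
        have hsplit : m.chords = insert s(a, l) (m.chords.erase s(a, l)) :=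
          (Finset.insert_erase hc).symm
        have hknot : ∀ d ∈ m.chords.erase s(a, l), a ∉ d := by
          intro d hd had
          exact m.disj _ hc d (Finset.mem_of_mem_erase hd)
            (fun h => (Finset.ne_of_mem_erase hd) h.symm) a (by simp) had
        have hcongr : ∀ d ∈ m.chords.erase s(a, l),
            Sym2.map (fS a) d = Sym2.map (fS (a + 1)) d := by
          intro d hd
          induction d using Sym2.ind with
          | _ x y =>
            have hx : x ≠ a := fun h => hknot _ hd (h ▸ (by simp))
            have hy : y ≠ a := fun h => hknot _ hd (h ▸ (by simp))
            rw [Sym2.map_pair_eq, Sym2.map_pair_eq]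
            have ex : fS a x = fS (a+1) x := by unfold fS; split_ifs <;> omega
            have ey : fS a y = fS (a+1) y := by unfold fS; split_ifs <;> omega
            rw [ex, ey]
        have himg : ∀ k', Finset.image (Sym2.map (fS k')) m.chords
            = insert (Sym2.map (fS k') s(a, l))
              (Finset.image (Sym2.map (fS k')) (m.chords.erase s(a, l))) := by
          intro k'
          conv_lhs => rw [hsplit]
          rw [Finset.image_insert]
        have hmapa : Sym2.map (fS a) s(a, l) = s(a + 2, lh) := by
          rw [Sym2.map_pair_eq]
          have h1 : fS a a = a + 2 := by unfold fS; simp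
          rw [h1, ← hlh]
        have hmapa1 : Sym2.map (fS (a + 1)) s(a, l) = s(a, lh) := by
          rw [Sym2.map_pair_eq]
          have h1 : fS (a+1) a = a := by unfold fS; simp
          have h2 : fS (a+1) l = lh := by
            rw [hlh]; unfold fS; split_ifs <;> omega
          rw [h1, h2]
        rw [himg a, himg (a+1), hmapa, hmapa1]
        have hE : Finset.image (Sym2.map (fS a)) (m.chords.erase s(a, l))
            = Finset.image (Sym2.map (fS (a+1))) (m.chords.erase s(a, l)) :=
          Finset.image_congr (fun d hd => hcongr d hd)
        rw [hE]
        set E := Finset.image (Sym2.map (fS (a+1))) (m.chords.erase s(a, l)) with hEdef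
        have hnm : s(a + 2, lh) ∉ E := by
          intro h
          obtain ⟨d, hd, hdeq⟩ := Finset.mem_image.mp h
          have : a + 2 ∈ Sym2.map (fS (a+1)) d := by rw [hdeq]; simp
          obtain ⟨y, hy, hye⟩ := Sym2.mem_map.mp this
          have hya : y = a := by unfold fS at hye; split_ifs at hye <;> omega
          exact hknot d hd (hya ▸ hy)
        rw [Finset.erase_insert hnm]
        -- goal: insert s(a+1,a+1+1) (insert s(a, lh) E) = insert s(a, lh) (insert s(a+1, a+2) E)
        rw [Finset.insert_comm]
  · -- k unmatched: first kind of step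
    push_neg at hmat
    left
    refine ⟨k, hshort, Finset.mem_Icc.mpr ⟨by omega, by omega⟩, ?_, ?_⟩
    · intro c hc hkc
      rw [ha] at hc
      rcases Finset.mem_insert.mp hc with rfl | hc
      · rcases Sym2.mem_iff.mp hkc with h | h <;> omega
      · obtain ⟨d, hd, rfl⟩ := Finset.mem_image.mp hc
        obtain ⟨y, hy, hye⟩ := Sym2.mem_map.mp hkc
        have : y = k := fS_eq_kp2 hye
        exact hmat d hd (this ▸ hy)
    · rw [ha, hb, Finset.erase_insert short_not_mem_image]
      congr 1
      apply Finset.image_congr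
      intro d hd
      induction d using Sym2.ind with
      | _ x y =>
        have hx : x ≠ k := fun h => hmat _ hd (h ▸ (by simp))
        have hy : y ≠ k := fun h => hmat _ hd (h ▸ (by simp))
        simp only [Sym2.map_pair_eq]
        have ex : fS (k+1) x = fS k x := by unfold fS; split_ifs <;> omega
        have ey : fS (k+1) y = fS k y := by unfold fS; split_ifs <;> omega
        rw [ex, ey]

lemma equiv_le (N : ℕ) (hN : 2 ≤ N) (m : MatchingOn (Finset.Icc 1 (N - 2)))
    (i : ℕ) (hi1 : 1 ≤ i) :
    ∀ j, i ≤ j → ∀ (hj : j ≤ N - 1)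
      (ma mb : MatchingOn (Finset.Icc 1 N)),
      ma.chords = insertChords i m.chords → mb.chords = insertChords j m.chords →
      KnuthEquiv ma mb := by
  intro j hij
  induction j, hij using Nat.le_induction with
  | base =>
    intro hj ma mb hma hmb
    have : ma = mb := MatchingOn.ext' (hma.trans hmb.symm)
    rw [this]
    exact Relation.ReflTransGen.refl
  | succ j hij ih =>
    intro hj ma mb hma hmb
    have hj' : j ≤ N - 1 := by omega
    have hj1 : 1 ≤ j := le_trans hi1 hij
    set mid := insM N j hj1 hj' hN m with hmid
    have h1 : KnuthEquiv ma mid := ih hj' ma mid hma rfl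
    have h2 : KnuthStep mid mb := step_adj N j hj1 hj hN m mid mb rfl hmb
    exact h1.trans (Relation.ReflTransGen.single (Or.inl h2))


/-- For any matching `m` on `[N-2]` and indices `1 ≤ i, j ≤ N-1`, the matchings
`insert_i(m)` and `insert_j(m)` on `[N]` are Knuth-like equivalent. -/
theorem stmt16 (N : ℕ) (m : MatchingOn (Finset.Icc 1 (N - 2))) (i j : ℕ)
    (hi1 : 1 ≤ i) (hiN : i ≤ N - 1) (hj1 : 1 ≤ j) (hjN : j ≤ N - 1)
    (mi mj : MatchingOn (Finset.Icc 1 N))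
    (hmi : mi.chords = insertChords i m.chords)
    (hmj : mj.chords = insertChords j m.chords) :
    KnuthEquiv mi mj := by
  have hN : 2 ≤ N := by omega
  have hsymm : Symmetric (fun a b : MatchingOn (Finset.Icc 1 N) =>
      KnuthStep a b ∨ KnuthStep b a) := fun a b h => h.symm
  rcases le_total i j with h | h
  · exact equiv_le N hN m i hi1 j h hjN mi mj hmi hmj
  · exact (@Relation.ReflTransGen.stdSymm _ _ ⟨fun a b h => hsymm h⟩).symm _ _
      (equiv_le N hN m j hj1 i h hiN mj mi hmj hmi)
end
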